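/- arXiv:2008.13480 — 4 statements merged into one kernel-verified Lean document; each statement's English description precedes it below -/
import Mathlib

section
/- Let B = ⋂_{u ∈ U} {x : u·x ≤ C(u)} with U the unit sphere in R^n and C: U → R continuous. Then o lies in the interior of B if and only if C(u) − u·o > 0 for all unit vectors u. -/
open scoped RealInnerProductSpace

/-- With `C` continuous on the unit sphere,
`o` lies in the interior of `B = ⋂_u {x | ⟪u,x⟫ ≤ C u}` iff
`C u - ⟪u,o⟫ > 0` for all unit vectors `u`. -/
theorem stmt_3 {n : ℕ} (C : EuclideanSpace ℝ (Fin n) → ℝ)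
    (hC : ContinuousOn C (Metric.sphere (0 : EuclideanSpace ℝ (Fin n)) 1))
    (o : EuclideanSpace ℝ (Fin n)) :
    o ∈ interior (⋂ u ∈ {u : EuclideanSpace ℝ (Fin n) | ‖u‖ = 1},
        {x : EuclideanSpace ℝ (Fin n) | ⟪u, x⟫ ≤ C u})
      ↔ ∀ u : EuclideanSpace ℝ (Fin n), ‖u‖ = 1 → 0 < C u - ⟪u, o⟫ := by
  constructor
  · intro h u hu
    rcases Metric.isOpen_iff.1 isOpen_interior o h with ⟨ε, hε, hball⟩
    have hmem : o + (ε/2) • u ∈ Metric.ball o ε := by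
      simp only [Metric.mem_ball, dist_eq_norm]
      rw [add_sub_cancel_left, norm_smul, hu]
      rw [mul_one, Real.norm_eq_abs, abs_of_pos (half_pos hε)]
      linarith
    have h2 := interior_subset (hball hmem)
    simp only [Set.mem_iInter] at h2
    have h3 := h2 u hu
    simp only [Set.mem_setOf_eq, inner_add_right, real_inner_smul_right] at h3
    have huu : ⟪u, u⟫ = 1 := by
      rw [real_inner_self_eq_norm_sq, hu]; norm_num
    rw [huu, mul_one] at h3
    have hε2 : 0 < ε / 2 := half_pos hε
    linarith
  · intro h
    rcases Set.eq_empty_or_nonempty (Metric.sphere (0 : EuclideanSpace ℝ (Fin n)) 1) with hs | hs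
    · have huniv : (⋂ u ∈ {u : EuclideanSpace ℝ (Fin n) | ‖u‖ = 1},
          {x : EuclideanSpace ℝ (Fin n) | ⟪u, x⟫ ≤ C u}) = Set.univ := by
        ext x
        simp only [Set.mem_iInter, Set.mem_univ, iff_true]
        intro u hu
        exact absurd (by simpa using hu : u ∈ Metric.sphere (0 : EuclideanSpace ℝ (Fin n)) 1)
          (by rw [hs]; exact Set.notMem_empty u)
      rw [huniv, interior_univ]; trivial
    · have hcont : ContinuousOn (fun u => C u - ⟪u, o⟫)
          (Metric.sphere (0 : EuclideanSpace ℝ (Fin n)) 1) :=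
        hC.sub ((continuous_id.inner continuous_const).continuousOn)
      obtain ⟨u₀, hu₀, hmin⟩ := (isCompact_sphere (0 : EuclideanSpace ℝ (Fin n)) 1).exists_isMinOn hs hcont
      rw [isMinOn_iff] at hmin
      set ε := C u₀ - ⟪u₀, o⟫ with hεdef
      have hε : 0 < ε := h u₀ (by simpa using hu₀)
      apply mem_interior.2
      refine ⟨Metric.ball o ε, ?_, Metric.isOpen_ball, Metric.mem_ball_self hε⟩
      intro x hx
      simp only [Set.mem_iInter, Set.mem_setOf_eq]
      intro u hu
      have hεu : ε ≤ C u - ⟪u, o⟫ := hmin u (by simpa using hu)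
      have hineq : ⟪u, x - o⟫ ≤ ‖x - o‖ := by
        calc ⟪u, x - o⟫ ≤ ‖u‖ * ‖x - o‖ := real_inner_le_norm u (x - o)
        _ = ‖x - o‖ := by rw [hu, one_mul]
      have hxo : ‖x - o‖ < ε := by
        rw [← dist_eq_norm]; exact hx
      have hsplit : ⟪u, x⟫ = ⟪u, o⟫ + ⟪u, x - o⟫ := by
        rw [← inner_add_right]; congr 1; abel
      linarith
end

section
/- Let u: Θ → S^{n−1} be regular and smooth, o ∈ R^n, C^o: Θ → (0,∞) smooth, and define s(θ) = o + 2C^o(θ)u(θ) and b(θ) = o + C^o(θ)u(θ) + ∇u(θ) g(θ)^{-1}(∇C^o(θ))ᵀ. Then ‖b(θ) − o‖ = ‖s(θ) − b(θ)‖ for all θ; i.e., b(θ) is equidistant from o and the surface point s(θ). -/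
open scoped RealInnerProductSpace

/-!
Since `‖u‖ = 1`, every tangent vector `∇u w` is orthogonal to `u`. Now `b - o = Cᵒu + ∇u w` and
`s - b = Cᵒu - ∇u w` are the two diagonals of a rectangle with sides `Cᵒu` and `∇u w`, hence
have equal length.
-/

open Filter Topology

theorem inner_fderiv_eq_zero_of_eventually_norm_eq {E F : Type*}
    [NormedAddCommGroup E] [NormedSpace ℝ E] [NormedAddCommGroup F] [InnerProductSpace ℝ F]
    {u : E → F} {x : E} {c : ℝ} (hu : DifferentiableAt ℝ u x)
    (hc : ∀ᶠ y in 𝓝 x, ‖u y‖ = c) (v : E) : ⟪u x, fderiv ℝ u x v⟫ = 0 := by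
  have hconst : HasFDerivAt (‖u ·‖ ^ 2) (0 : E →L[ℝ] ℝ) x :=
    (hasFDerivAt_const (c ^ 2) x).congr_of_eventuallyEq (hc.mono fun y hy => by simp only [hy])
  have hD := congrArg (· v) (hu.hasFDerivAt.norm_sq.unique hconst)
  simpa using hD

theorem stmt_15_general {m : ℕ} (Θ : Set (EuclideanSpace ℝ (Fin m))) (hΘ : IsOpen Θ)
    (u : EuclideanSpace ℝ (Fin m) → EuclideanSpace ℝ (Fin (m + 1)))
    (Co : EuclideanSpace ℝ (Fin m) → ℝ)
    (o : EuclideanSpace ℝ (Fin (m + 1)))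
    (hu : ∀ θ ∈ Θ, ‖u θ‖ = 1)
    (husmooth : ∀ θ ∈ Θ, ContDiffAt ℝ 1 u θ)
    (w : EuclideanSpace ℝ (Fin m) → EuclideanSpace ℝ (Fin m))
    (s b : EuclideanSpace ℝ (Fin m) → EuclideanSpace ℝ (Fin (m + 1)))
    (hs : s = fun θ => o + (2 * Co θ) • u θ)
    (hb : b = fun θ => o + Co θ • u θ + fderiv ℝ u θ (w θ)) :
    ∀ θ ∈ Θ, ‖b θ - o‖ = ‖s θ - b θ‖ := by
  intro θ hθ
  have horth : ⟪fderiv ℝ u θ (w θ), Co θ • u θ⟫ = 0 := by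
    rw [real_inner_smul_right, real_inner_comm,
      inner_fderiv_eq_zero_of_eventually_norm_eq ((husmooth θ hθ).differentiableAt one_ne_zero)
        (eventually_of_mem (hΘ.mem_nhds hθ) hu), mul_zero]
  have hbo : b θ - o = Co θ • u θ + fderiv ℝ u θ (w θ) := by
    simp only [hb]; abel
  have hsb : s θ - b θ = Co θ • u θ - fderiv ℝ u θ (w θ) := by
    simp only [hs, hb, two_mul, add_smul]; abel
  rw [hbo, hsb, norm_sub_eq_norm_add horth]

/-- Equidistance: with `s(θ) = o + 2C^o(θ)u(θ)` and
`b(θ) = o + C^o(θ)u(θ) + ∇u(θ) g(θ)⁻¹ (∇C^o(θ))ᵀ` (where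
`w(θ) = g(θ)⁻¹(∇C^o(θ))ᵀ` is characterized by `(∇u)ᵀ∇u w = ∇C^o`),
the point `b(θ)` is equidistant from `o` and `s(θ)`. -/
theorem stmt_15 {m : ℕ} (Θ : Set (EuclideanSpace ℝ (Fin m))) (hΘ : IsOpen Θ)
    (u : EuclideanSpace ℝ (Fin m) → EuclideanSpace ℝ (Fin (m + 1)))
    (Co : EuclideanSpace ℝ (Fin m) → ℝ)
    (o : EuclideanSpace ℝ (Fin (m + 1)))
    (hu : ∀ θ ∈ Θ, ‖u θ‖ = 1)
    (husmooth : ∀ θ ∈ Θ, ContDiffAt ℝ 1 u θ)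
    (hreg : ∀ θ ∈ Θ, Function.Injective (fderiv ℝ u θ))
    (hCo : ∀ θ ∈ Θ, 0 < Co θ)
    (hCosmooth : ∀ θ ∈ Θ, ContDiffAt ℝ 1 Co θ)
    (w : EuclideanSpace ℝ (Fin m) → EuclideanSpace ℝ (Fin m))
    (hw : ∀ θ ∈ Θ, ContinuousLinearMap.adjoint (fderiv ℝ u θ)
        (fderiv ℝ u θ (w θ)) = gradient Co θ)
    (s b : EuclideanSpace ℝ (Fin m) → EuclideanSpace ℝ (Fin (m + 1)))
    (hs : s = fun θ => o + (2 * Co θ) • u θ)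
    (hb : b = fun θ => o + Co θ • u θ + fderiv ℝ u θ (w θ)) :
    ∀ θ ∈ Θ, ‖b θ - o‖ = ‖s θ - b θ‖ :=
  stmt_15_general Θ hΘ u Co o hu husmooth w s b hs hb
end

section
/- With s(θ) = o + 2C^o(θ)u(θ) and b(θ) as in the previous statement, the vector s(θ) − b(θ) is orthogonal to the tangent space of the surface θ ↦ s(θ) at s(θ); explicitly, (∇s(θ))ᵀ(s(θ) − b(θ)) = 0 for all θ. -/
open scoped RealInnerProductSpace

/-!
Differentiating `‖u‖² = 1` gives `⟪∇u v, u⟫ = 0`, and the equation defining `w` gives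
`⟪∇u v, ∇u w⟫ = ∇C v`. Since `∇s v = 2C ∇u v + 2(∇C v) u` and `s - b = C u - ∇u w`, the inner
product reduces to `-2C ∇C v + 2(∇C v) C = 0`.
-/

section

variable {E F : Type*} [NormedAddCommGroup E] [NormedSpace ℝ E]
  [NormedAddCommGroup F] [InnerProductSpace ℝ F]

theorem inner_fderiv_apply_self_eq_zero_of_eventually_norm_eq_one {f : E → F} {x : E}
    (hf : DifferentiableAt ℝ f x) (h1 : ∀ᶠ y in nhds x, ‖f y‖ = 1) (v : E) :
    ⟪fderiv ℝ f x v, f x⟫ = 0 := by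
  have hconst : (fun y => ‖f y‖ ^ 2) =ᶠ[nhds x] fun _ => (1 : ℝ) := by
    filter_upwards [h1] with y hy
    rw [hy, one_pow]
  have hzero : 2 • (innerSL ℝ (f x)).comp (fderiv ℝ f x) = 0 :=
    hf.hasFDerivAt.norm_sq.unique ((hasFDerivAt_const 1 x).congr_of_eventuallyEq hconst)
  have := congrArg (fun L : E →L[ℝ] ℝ => L v) hzero
  simpa [real_inner_comm] using this

end

section

variable {E F : Type*} [NormedAddCommGroup E] [InnerProductSpace ℝ E] [CompleteSpace E]
  [NormedAddCommGroup F] [InnerProductSpace ℝ F] [CompleteSpace F]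

theorem inner_apply_apply_eq_fderiv_of_adjoint_eq_gradient {D : E →L[ℝ] F} {g : E → ℝ}
    {x w : E} (hw : ContinuousLinearMap.adjoint D (D w) = gradient g x) (v : E) :
    ⟪D v, D w⟫ = fderiv ℝ g x v := by
  rw [← ContinuousLinearMap.adjoint_inner_right, hw, real_inner_comm, gradient,
    InnerProductSpace.toDual_symm_apply]

end

theorem fderiv_const_add_two_mul_smul_apply {E F : Type*} [NormedAddCommGroup E]
    [NormedSpace ℝ E] [NormedAddCommGroup F] [NormedSpace ℝ F] {c : E → ℝ} {u : E → F}
    {x : E} (hc : DifferentiableAt ℝ c x) (hu : DifferentiableAt ℝ u x) (o : F) (v : E) :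
    fderiv ℝ (fun y => o + (2 * c y) • u y) x v
      = (2 * c x) • fderiv ℝ u x v + (2 * fderiv ℝ c x v) • u x := by
  rw [fderiv_const_add, fderiv_fun_smul (hc.const_mul 2) hu, fderiv_const_mul hc]
  simp

theorem stmt_16_general {m : ℕ} (Θ : Set (EuclideanSpace ℝ (Fin m))) (hΘ : IsOpen Θ)
    (u : EuclideanSpace ℝ (Fin m) → EuclideanSpace ℝ (Fin (m + 1)))
    (Co : EuclideanSpace ℝ (Fin m) → ℝ)
    (o : EuclideanSpace ℝ (Fin (m + 1)))
    (hu : ∀ θ ∈ Θ, ‖u θ‖ = 1)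
    (husmooth : ∀ θ ∈ Θ, ContDiffAt ℝ 1 u θ)
    (hCosmooth : ∀ θ ∈ Θ, ContDiffAt ℝ 1 Co θ)
    (w : EuclideanSpace ℝ (Fin m) → EuclideanSpace ℝ (Fin m))
    (hw : ∀ θ ∈ Θ, ContinuousLinearMap.adjoint (fderiv ℝ u θ)
        (fderiv ℝ u θ (w θ)) = gradient Co θ)
    (s b : EuclideanSpace ℝ (Fin m) → EuclideanSpace ℝ (Fin (m + 1)))
    (hs : s = fun θ => o + (2 * Co θ) • u θ)
    (hb : b = fun θ => o + Co θ • u θ + fderiv ℝ u θ (w θ)) :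
    ∀ θ ∈ Θ, ∀ v : EuclideanSpace ℝ (Fin m),
      ⟪fderiv ℝ s θ v, s θ - b θ⟫ = 0 := by
  subst hs hb
  intro θ hθ v
  have hud := (husmooth θ hθ).differentiableAt one_ne_zero
  have hsphere : ∀ᶠ y in nhds θ, ‖u y‖ = 1 := Filter.eventually_of_mem (hΘ.mem_nhds hθ) hu
  have hDv_u := inner_fderiv_apply_self_eq_zero_of_eventually_norm_eq_one hud hsphere v
  have hDw_u := inner_fderiv_apply_self_eq_zero_of_eventually_norm_eq_one hud hsphere (w θ)
  have hDv_Dw := inner_apply_apply_eq_fderiv_of_adjoint_eq_gradient (hw θ hθ) v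
  have huu : ⟪u θ, u θ⟫ = 1 := by rw [real_inner_self_eq_norm_sq, hu θ hθ, one_pow]
  have hdiff : o + (2 * Co θ) • u θ - (o + Co θ • u θ + fderiv ℝ u θ (w θ))
      = Co θ • u θ - fderiv ℝ u θ (w θ) := by
    rw [two_mul, add_smul]; abel
  rw [fderiv_const_add_two_mul_smul_apply ((hCosmooth θ hθ).differentiableAt one_ne_zero) hud,
    hdiff, inner_add_left, inner_sub_right, inner_sub_right, real_inner_smul_left,
    real_inner_smul_left, real_inner_smul_left, real_inner_smul_left, real_inner_smul_right,
    real_inner_smul_right, hDv_u, hDv_Dw, huu, real_inner_comm (fderiv ℝ u θ (w θ)), hDw_u]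
  ring

/-- Orthogonality: with `s(θ) = o + 2C^o(θ)u(θ)` and
`b(θ) = o + C^o(θ)u(θ) + ∇u(θ) g(θ)⁻¹ (∇C^o(θ))ᵀ` (where
`w(θ) = g(θ)⁻¹(∇C^o(θ))ᵀ` is characterized by `(∇u)ᵀ∇u w = ∇C^o`),
the vector `s(θ) - b(θ)` is orthogonal to the tangent space of the surface
`θ ↦ s(θ)` at `s(θ)`: `(∇s(θ))ᵀ(s(θ) - b(θ)) = 0`. -/
theorem stmt_16 {m : ℕ} (Θ : Set (EuclideanSpace ℝ (Fin m))) (hΘ : IsOpen Θ)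
    (u : EuclideanSpace ℝ (Fin m) → EuclideanSpace ℝ (Fin (m + 1)))
    (Co : EuclideanSpace ℝ (Fin m) → ℝ)
    (o : EuclideanSpace ℝ (Fin (m + 1)))
    (hu : ∀ θ ∈ Θ, ‖u θ‖ = 1)
    (husmooth : ∀ θ ∈ Θ, ContDiffAt ℝ 1 u θ)
    (hreg : ∀ θ ∈ Θ, Function.Injective (fderiv ℝ u θ))
    (hCo : ∀ θ ∈ Θ, 0 < Co θ)
    (hCosmooth : ∀ θ ∈ Θ, ContDiffAt ℝ 1 Co θ)
    (w : EuclideanSpace ℝ (Fin m) → EuclideanSpace ℝ (Fin m))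
    (hw : ∀ θ ∈ Θ, ContinuousLinearMap.adjoint (fderiv ℝ u θ)
        (fderiv ℝ u θ (w θ)) = gradient Co θ)
    (s b : EuclideanSpace ℝ (Fin m) → EuclideanSpace ℝ (Fin (m + 1)))
    (hs : s = fun θ => o + (2 * Co θ) • u θ)
    (hb : b = fun θ => o + Co θ • u θ + fderiv ℝ u θ (w θ)) :
    ∀ θ ∈ Θ, ∀ v : EuclideanSpace ℝ (Fin m),
      ⟪fderiv ℝ s θ v, s θ - b θ⟫ = 0 :=
  stmt_16_general Θ hΘ u Co o hu husmooth hCosmooth w hw s b hs hb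
end

section
/- (2D existence criterion) Let C: R → R be twice differentiable and 2π-periodic, and suppose the family of half-planes Π⁻(θ) = {x ∈ R² : x·(cos θ, sin θ) ≤ C(θ)} admits a proper convex contour, i.e., every line {x : x·(cos θ, sin θ) = C(θ)} supports B = ⋂_θ Π⁻(θ). Then C(θ) + C''(θ) ≥ 0 for all θ. -/
/-!
If the line `x ⋅ (cos θ, sin θ) = C θ` touches `B` at a point `b`, then `C` dominates the support
function `φ ↦ b ⋅ (cos φ, sin φ)` of `{b}` with equality at `θ`, so `C - b ⋅ (cos ·, sin ·)` has a
global minimum at `θ` and its second derivative there is nonnegative. Since the support function of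
a point solves `h'' = -h`, that second derivative is `C''(θ) + C(θ)`.
-/

open Real Filter Set Topology

theorem IsLocalMin.deriv_deriv_nonneg {f : ℝ → ℝ} {a : ℝ} (hmin : IsLocalMin f a)
    (hc : ContinuousAt f a) : 0 ≤ deriv (deriv f) a := by
  by_contra! hneg
  -- By the second-derivative test `a` is also a local maximum, so `f` is locally constant.
  have hmax := isLocalMax_of_deriv_deriv_neg hneg hmin.deriv_eq_zero hc
  have hconst : f =ᶠ[𝓝 a] fun _ => f a :=
    (hmin.and hmax).mono fun _ hx => le_antisymm hx.2 hx.1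
  have hderiv : deriv f =ᶠ[𝓝 a] fun _ => 0 :=
    hconst.eventuallyEq_nhds.mono fun _ hx => by rw [hx.deriv_eq, deriv_const]
  exact hneg.ne (by rw [hderiv.deriv_eq, deriv_const])

noncomputable def pointSupport (b : ℝ × ℝ) (φ : ℝ) : ℝ := b.1 * cos φ + b.2 * sin φ

theorem hasDerivAt_pointSupport (b : ℝ × ℝ) (φ : ℝ) :
    HasDerivAt (pointSupport b) (pointSupport (b.2, -b.1) φ) φ := by
  have h := ((hasDerivAt_cos φ).const_mul b.1).add ((hasDerivAt_sin φ).const_mul b.2)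
  rwa [show b.1 * -sin φ + b.2 * cos φ = pointSupport (b.2, -b.1) φ by
    simp only [pointSupport]; ring] at h

theorem deriv_pointSupport (b : ℝ × ℝ) : deriv (pointSupport b) = pointSupport (b.2, -b.1) :=
  funext fun φ => (hasDerivAt_pointSupport b φ).deriv

theorem deriv_deriv_sub_pointSupport {C : ℝ → ℝ} {θ : ℝ}
    (hC1 : ∀ᶠ φ in 𝓝 θ, DifferentiableAt ℝ C φ) (hC2 : DifferentiableAt ℝ (deriv C) θ)
    (b : ℝ × ℝ) :
    deriv (deriv (C - pointSupport b)) θ = deriv (deriv C) θ + pointSupport b θ := by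
  have hderiv : deriv (C - pointSupport b) =ᶠ[𝓝 θ] deriv C - pointSupport (b.2, -b.1) :=
    hC1.mono fun φ hφ => by
      rw [deriv_sub hφ (hasDerivAt_pointSupport b φ).differentiableAt, deriv_pointSupport]
      rfl
  rw [hderiv.deriv_eq, deriv_sub hC2 (hasDerivAt_pointSupport _ θ).differentiableAt,
    deriv_pointSupport]
  simp only [pointSupport]
  ring

theorem stmt_18_general (C : ℝ → ℝ)
    (hC1 : ∀ θ, DifferentiableAt ℝ C θ)
    (hC2 : ∀ θ, DifferentiableAt ℝ (deriv C) θ)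
    (hproper : ∀ θ : ℝ,
      ∃ b ∈ ⋂ φ : ℝ, {x : ℝ × ℝ | x.1 * Real.cos φ + x.2 * Real.sin φ ≤ C φ},
        b.1 * Real.cos θ + b.2 * Real.sin θ = C θ) :
    ∀ θ : ℝ, 0 ≤ C θ + deriv (deriv C) θ := by
  intro θ
  obtain ⟨b, hbB, hbθ⟩ := hproper θ
  simp only [mem_iInter, mem_ofPred_eq] at hbB
  have hmin : IsLocalMin (C - pointSupport b) θ :=
    Eventually.of_forall fun φ => by
      simpa [pointSupport, hbθ] using hbB φ
  have hc : ContinuousAt (C - pointSupport b) θ :=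
    (hC1 θ).continuousAt.sub (hasDerivAt_pointSupport b θ).continuousAt
  have hsecond := hmin.deriv_deriv_nonneg hc
  rw [deriv_deriv_sub_pointSupport (Eventually.of_forall hC1) (hC2 θ), pointSupport, hbθ] at hsecond
  linarith

/-- 2D existence criterion: if every supporting line of the family of
half-planes `Π⁻(θ) = {x | x ⋅ (cos θ, sin θ) ≤ C θ}` actually touches
`B = ⋂_θ Π⁻(θ)` (a proper convex contour), then `C(θ) + C''(θ) ≥ 0`. -/
theorem stmt_18 (C : ℝ → ℝ)
    (hC1 : ∀ θ, DifferentiableAt ℝ C θ)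
    (hC2 : ∀ θ, DifferentiableAt ℝ (deriv C) θ)
    (hper : Function.Periodic C (2 * π))
    (hproper : ∀ θ : ℝ,
      ∃ b ∈ ⋂ φ : ℝ, {x : ℝ × ℝ | x.1 * Real.cos φ + x.2 * Real.sin φ ≤ C φ},
        b.1 * Real.cos θ + b.2 * Real.sin θ = C θ) :
    ∀ θ : ℝ, 0 ≤ C θ + deriv (deriv C) θ :=
  stmt_18_general C hC1 hC2 hproper
end
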